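/- arXiv:2008.06406 — 5 statements merged into one kernel-verified Lean document; each statement's English description precedes it below -/
import Mathlib

section
/- Let ω be an affine permutation of size N with N ≥ k. Then ω avoids the decreasing pattern (k+1)k⋯21 if and only if [N] can be partitioned into k nonempty sets G_1, …, G_k such that for each i, writing G_i = {g_{i,1} < g_{i,2} < ⋯ < g_{i,n_i}}, one has ω(g_{i,1}) < ω(g_{i,2}) < ⋯ < ω(g_{i,n_i}) < ω(g_{i,1} + N). -/
/-- An affine permutation of size `N`. -/
def IsAffinePerm (N : ℕ) (σ : ℤ → ℤ) : Prop :=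
  Function.Bijective σ ∧ (∀ i : ℤ, σ (i + N) = σ i + N) ∧
    ∑ i ∈ Finset.Icc (1 : ℤ) N, σ i = ∑ i ∈ Finset.Icc (1 : ℤ) N, i

/-- `ω` avoids the decreasing pattern `(k+1)k⋯21` of size `k+1`. -/
def AvoidsDec (k : ℕ) (ω : ℤ → ℤ) : Prop :=
  ¬ ∃ a : Fin (k + 1) → ℤ, StrictMono a ∧ StrictAnti (fun j => ω (a j))

/-!
Order `ℤ` by `x ≼ y` iff `x ≤ y` and `ω y ≤ ω x`: for injective `ω` the chains of this poset are
the decreasing patterns of `ω`, and translation by `N` is an automorphism of it. If `ω` avoids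
`(k+1)⋯21`, every element has height `< k`, and two elements of the same height are never
comparable, so each height class is increasing under `ω` and, being `N`-periodic, also wraps around
correctly. Since `N ≥ k`, the at most `k` height classes met by `[N]` can be split into exactly `k`
blocks. Conversely, two of the `k + 1` entries of a decreasing pattern reduce modulo `N` into the
same block, and the block conditions, propagated by periodicity, force `ω` to increase from one to
the other.
-/

open Finset

namespace Finset

variable {α : Type*} [DecidableEq α] {s : Finset α} {k : ℕ}

theorem exists_fin_partition_of_card_image_eq {γ : Type*} [DecidableEq γ] (ℓ : α → γ)
    (hk : #(s.image ℓ) = k) :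
    ∃ G : Fin k → Finset α, (∀ i, (G i).Nonempty) ∧ univ.biUnion G = s ∧
      (∀ i j, i ≠ j → Disjoint (G i) (G j)) ∧ ∀ i, ∀ x ∈ G i, ∀ y ∈ G i, ℓ x = ℓ y := by
  let e := equivFinOfCardEq hk
  refine ⟨fun i => s.filter (ℓ · = e.symm i), fun i => ?_, ?_, fun i j hij => ?_, ?_⟩
  · obtain ⟨x, hx, hxi⟩ := mem_image.1 (e.symm i).2
    exact ⟨x, mem_filter.2 ⟨hx, hxi⟩⟩
  · ext x
    simp only [mem_biUnion, mem_univ, true_and, mem_filter]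
    exact ⟨fun ⟨_, hx, _⟩ => hx, fun hx => ⟨e ⟨ℓ x, mem_image_of_mem ℓ hx⟩, hx, by simp⟩⟩
  · refine disjoint_left.2 fun x hxi hxj => hij (e.symm.injective (Subtype.ext ?_))
    exact (mem_filter.1 hxi).2.symm.trans (mem_filter.1 hxj).2
  · intro i x hx y hy
    exact (mem_filter.1 hx).2.trans (mem_filter.1 hy).2.symm

theorem exists_refinement_card_image_eq {β : Type*} [DecidableEq β] (g : α → β)
    (himg : #(s.image g) ≤ k) (hs : k ≤ #s) :
    ∃ ℓ : α → β ⊕ α, #(s.image ℓ) = k ∧ ∀ x ∈ s, ∀ y ∈ s, ℓ x = ℓ y → g x = g y := by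
  obtain ⟨R, hRs, hRinj, hRimg⟩ :=
    exists_subset_injOn_image_eq_of_surjOn (f := g) s (s.image g)
      (by simpa only [coe_image] using Set.surjOn_image g s)
  have hR : #R = #(s.image g) := hRimg ▸ (card_image_of_injOn hRinj).symm
  obtain ⟨E, hE, hEcard⟩ := exists_subset_card_eq (s := s \ R) (n := k - #(s.image g))
    (by rw [card_sdiff_of_subset (by exact_mod_cast hRs)]; omega)
  -- one new singleton block for each element of `E`, chosen away from a set `R` of representatives
  refine ⟨fun x => if x ∈ E then .inr x else .inl (g x), ?_, fun x _ y _ hxy => ?_⟩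
  · have himage :
        s.image (fun x => if x ∈ E then .inr x else .inl (g x)) = (s.image g).disjSum E := by
      ext (t | x)
      · rw [mem_image, inl_mem_disjSum]
        constructor
        · rintro ⟨x, hx, hxt⟩
          split_ifs at hxt with hxE
          exact Sum.inl_injective hxt ▸ mem_image_of_mem g hx
        · intro ht
          rw [← hRimg] at ht
          obtain ⟨r, hr, rfl⟩ := mem_image.1 ht
          have hrE : r ∉ E := fun h => (mem_sdiff.1 (hE h)).2 hr
          exact ⟨r, hRs hr, by simp [hrE]⟩
      · simp only [mem_image, inr_mem_disjSum]
        constructor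
        · rintro ⟨y, -, hyx⟩
          split_ifs at hyx with hyE
          exact Sum.inr_injective hyx ▸ hyE
        · intro hx
          exact ⟨x, (mem_sdiff.1 (hE hx)).1, by simp [hx]⟩
    rw [himage, card_disjSum]
    omega
  · simp only at hxy
    split_ifs at hxy <;> simp_all

theorem exists_fin_partition_refining {β : Type*} [DecidableEq β] (g : α → β)
    (himg : #(s.image g) ≤ k) (hs : k ≤ #s) :
    ∃ G : Fin k → Finset α, (∀ i, (G i).Nonempty) ∧ univ.biUnion G = s ∧
      (∀ i j, i ≠ j → Disjoint (G i) (G j)) ∧ ∀ i, ∀ x ∈ G i, ∀ y ∈ G i, g x = g y := by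
  obtain ⟨ℓ, hℓ, hℓg⟩ := exists_refinement_card_image_eq g himg hs
  obtain ⟨G, hne, hcov, hdisj, hfib⟩ := exists_fin_partition_of_card_image_eq ℓ hℓ
  have hsub : ∀ i, G i ⊆ s := fun i => hcov ▸ subset_biUnion_of_mem G (mem_univ i)
  exact ⟨G, hne, hcov, hdisj, fun i x hx y hy => hℓg x (hsub i hx) y (hsub i hy) (hfib i x hx y hy)⟩

end Finset

def InversionOrder (_ω : ℤ → ℤ) : Type := ℤ

namespace InversionOrder

variable {ω : ℤ → ℤ}

variable (ω) in
def of : ℤ ≃ InversionOrder ω := Equiv.refl ℤ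

noncomputable instance : PartialOrder (InversionOrder ω) :=
  PartialOrder.lift (fun x => ((of ω).symm x, -ω ((of ω).symm x)))
    fun _ _ h => (of ω).symm.injective (congrArg Prod.fst h)

theorem of_le_of {x y : ℤ} : of ω x ≤ of ω y ↔ x ≤ y ∧ ω y ≤ ω x :=
  Prod.mk_le_mk.trans (and_congr_right' neg_le_neg_iff)

theorem of_lt_of {x y : ℤ} : of ω x < of ω y ↔ x < y ∧ ω y ≤ ω x := by
  rw [lt_iff_le_not_ge, of_le_of, of_le_of]
  constructor
  · rintro ⟨⟨hxy, hω⟩, hyx⟩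
    exact ⟨lt_of_le_of_ne hxy fun h => hyx ⟨h.ge, h ▸ le_rfl⟩, hω⟩
  · rintro ⟨hxy, hω⟩
    exact ⟨⟨hxy.le, hω⟩, fun h => (not_le.2 hxy) h.1⟩

theorem height_of_add {N : ℤ} (hper : ∀ i, ω (i + N) = ω i + N) (x : ℤ) :
    Order.height (of ω (x + N)) = Order.height (of ω x) := by
  let e : InversionOrder ω ≃o InversionOrder ω :=
    { toEquiv := (of ω).symm.trans ((Equiv.addRight N).trans (of ω))
      map_rel_iff' := fun {a b} => by
        obtain ⟨x, rfl⟩ := (of ω).surjective a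
        obtain ⟨y, rfl⟩ := (of ω).surjective b
        simp [of_le_of, hper] }
  exact Order.height_orderIso e (of ω x)

theorem height_lt_of_avoidsDec (hinj : Function.Injective ω) {k : ℕ} (hav : AvoidsDec k ω)
    (x : InversionOrder ω) : Order.height x < k := by
  by_contra! hk
  obtain ⟨p, -, rfl⟩ := Order.exists_series_of_le_height x hk
  have hp (i j : Fin (p.length + 1)) (hij : i < j) :
      (of ω).symm (p i) < (of ω).symm (p j) ∧ ω ((of ω).symm (p j)) < ω ((of ω).symm (p i)) := by
    have := p.strictMono hij
    rw [← (of ω).apply_symm_apply (p i), ← (of ω).apply_symm_apply (p j), of_lt_of] at this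
    exact ⟨this.1, this.2.lt_of_ne (hinj.ne this.1.ne')⟩
  exact hav ⟨fun j => (of ω).symm (p j), fun i j hij => (hp i j hij).1,
    fun i j hij => (hp i j hij).2⟩

theorem map_lt_map_of_height_eq {x y : ℤ} (hxy : x < y)
    (hh : Order.height (of ω x) = Order.height (of ω y)) (hfin : Order.height (of ω x) ≠ ⊤) :
    ω x < ω y := by
  by_contra! hω
  have := Order.height_add_one_le (of_lt_of.2 ⟨hxy, hω⟩)
  rw [← hh, ENat.add_one_le_iff hfin] at this
  exact this.false

end InversionOrder

theorem map_add_mul_of_map_add {N : ℤ} {ω : ℤ → ℤ} (hper : ∀ i, ω (i + N) = ω i + N) (x m : ℤ) :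
    ω (x + m * N) = ω x + m * N := by
  have hp : Function.Periodic (fun i => ω i - i) N := fun i => by simp only [hper]; ring
  have := hp.int_mul m x
  simp only [Int.cast_id] at this
  linarith

theorem exists_mem_Icc_add_mul {N : ℤ} (hN : 0 < N) (x : ℤ) :
    ∃ r ∈ Icc 1 N, ∃ q : ℤ, x = r + q * N := by
  refine ⟨(x - 1) % N + 1, mem_Icc.2 ⟨?_, ?_⟩, (x - 1) / N, ?_⟩
  · linarith [Int.emod_nonneg (x - 1) hN.ne']
  · linarith [Int.emod_lt_of_pos (x - 1) hN]
  · linarith [Int.emod_add_mul_ediv (x - 1) N]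

theorem map_lt_map_of_periodic_block {N : ℤ} {ω : ℤ → ℤ} (hper : ∀ i, ω (i + N) = ω i + N)
    {r r' : ℤ} (hr : r ∈ Icc 1 N) (hr' : r' ∈ Icc 1 N) (hmono : r < r' → ω r < ω r')
    (hwrap : ω r < ω (r' + N)) {p q : ℤ} (hlt : r + p * N < r' + q * N) :
    ω (r + p * N) < ω (r' + q * N) := by
  rw [mem_Icc] at hr hr'
  rw [map_add_mul_of_map_add hper, map_add_mul_of_map_add hper]
  rw [hper] at hwrap
  rcases lt_trichotomy p q with hpq | rfl | hqp
  · nlinarith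
  · linarith [hmono (by linarith)]
  · nlinarith

open InversionOrder in
theorem exists_blocks_of_avoidsDec {N k : ℕ} {ω : ℤ → ℤ} (hkN : k ≤ N)
    (hinj : Function.Injective ω) (hper : ∀ i : ℤ, ω (i + N) = ω i + N) (hav : AvoidsDec k ω) :
    ∃ G : Fin k → Finset ℤ,
      (∀ i, (G i).Nonempty) ∧
      (univ.biUnion G = Icc (1 : ℤ) N) ∧
      (∀ i j, i ≠ j → Disjoint (G i) (G j)) ∧
      (∀ i, ∀ a ∈ G i, ∀ b ∈ G i, a < b → ω a < ω b) ∧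
      (∀ i, ∀ a ∈ G i, ∀ b ∈ G i, ω a < ω (b + N)) := by
  let h : ℤ → ℕ∞ := fun x => Order.height (of ω x)
  have hlt (x : ℤ) : h x < k := height_lt_of_avoidsDec hinj hav _
  have himg : #((Icc (1 : ℤ) N).image h) ≤ k := by
    refine (card_le_card (t := (range k).image ((↑) : ℕ → ℕ∞)) fun n hn => ?_).trans
      (card_image_le.trans (card_range k).le)
    obtain ⟨x, -, rfl⟩ := mem_image.1 hn
    have hx := hlt x
    generalize h x = n at hx
    lift n to ℕ using hx.ne_top
    exact mem_image_of_mem _ (mem_range.2 (by exact_mod_cast hx))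
  obtain ⟨G, hne, hcov, hdisj, hfib⟩ := exists_fin_partition_refining h himg (by simp; omega)
  have hsub (i : Fin k) : G i ⊆ Icc 1 N := hcov ▸ subset_biUnion_of_mem G (mem_univ i)
  refine ⟨G, hne, hcov, hdisj, fun i a ha b hb hab =>
    map_lt_map_of_height_eq hab (hfib i a ha b hb) (hlt a).ne_top, fun i a ha b hb => ?_⟩
  have ha' := mem_Icc.1 (hsub i ha)
  have hb' := mem_Icc.1 (hsub i hb)
  exact map_lt_map_of_height_eq (by omega) ((hfib i a ha b hb).trans (height_of_add hper b).symm)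
    (hlt a).ne_top

theorem avoidsDec_of_blocks {N k : ℕ} {ω : ℤ → ℤ} (hN : 0 < N)
    (hper : ∀ i : ℤ, ω (i + N) = ω i + N) (G : Fin k → Finset ℤ)
    (hcov : univ.biUnion G = Icc (1 : ℤ) N)
    (hmono : ∀ i, ∀ a ∈ G i, ∀ b ∈ G i, a < b → ω a < ω b)
    (hwrap : ∀ i, ∀ a ∈ G i, ∀ b ∈ G i, ω a < ω (b + N)) :
    AvoidsDec k ω := by
  rintro ⟨a, ha, hωa⟩
  have hsub (i : Fin k) : G i ⊆ Icc 1 N := hcov ▸ subset_biUnion_of_mem G (mem_univ i)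
  have hdecomp (j : Fin (k + 1)) : ∃ i, ∃ r ∈ G i, ∃ q : ℤ, a j = r + q * N := by
    obtain ⟨r, hr, q, hq⟩ := exists_mem_Icc_add_mul (N := N) (by exact_mod_cast hN) (a j)
    obtain ⟨i, -, hri⟩ := mem_biUnion.1 (hcov.symm ▸ hr)
    exact ⟨i, r, hri, q, hq⟩
  choose f r hr q hq using hdecomp
  have hsame_block {s t : Fin (k + 1)} (hf : f s = f t) (hst : s < t) : False := by
    have hrt : r t ∈ G (f s) := hf ▸ hr t
    have := map_lt_map_of_periodic_block hper (hsub _ (hr s)) (hsub _ hrt)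
      (hmono _ _ (hr s) _ hrt) (hwrap _ _ (hr s) _ hrt) (hq s ▸ hq t ▸ ha hst)
    rw [← hq, ← hq] at this
    exact (hωa hst).not_gt this
  obtain ⟨s, t, hst, hf⟩ := Fintype.exists_ne_map_eq_of_card_lt f (by simp)
  rcases hst.lt_or_gt with hst | hts
  exacts [hsame_block hf hst, hsame_block hf.symm hts]

/-- an affine permutation of size N ≥ k avoids (k+1)⋯21 iff [N] can be
partitioned into k nonempty periodic increasing blocks. -/
theorem stmt_2 (N k : ℕ) (hk : 1 ≤ k) (hkN : k ≤ N) (ω : ℤ → ℤ)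
    (hω : IsAffinePerm N ω) :
    AvoidsDec k ω ↔
      ∃ G : Fin k → Finset ℤ,
        (∀ i, (G i).Nonempty) ∧
        (Finset.univ.biUnion G = Finset.Icc (1 : ℤ) N) ∧
        (∀ i j, i ≠ j → Disjoint (G i) (G j)) ∧
        (∀ i, ∀ a ∈ G i, ∀ b ∈ G i, a < b → ω a < ω b) ∧
        (∀ i, ∀ a ∈ G i, ∀ b ∈ G i, ω a < ω (b + N)) := by
  obtain ⟨hbij, hper, -⟩ := hω
  refine ⟨exists_blocks_of_avoidsDec hkN hbij.injective hper, ?_⟩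
  rintro ⟨G, -, hcov, -, hmono, hwrap⟩
  exact avoidsDec_of_blocks (by omega) hper G hcov hmono hwrap
end

section
/- Let ω be an affine permutation. For a ∈ ℤ, define the rank of a in ω as the maximum length r of a sequence a = a_1 < a_2 < ⋯ < a_r with ω(a_1) > ω(a_2) > ⋯ > ω(a_r). If ω avoids the decreasing pattern of size k+1, then every integer has rank between 1 and k, and integers a, a+N have equal rank, and for any two integers a < a' of the same rank arising as the starts of maximal decreasing subsequences, ω(a) < ω(a'); i.e., the integers of any fixed rank form an increasing subsequence of ω. -/
/-- The rank of `a` in `ω`: the maximum length of a decreasing subsequence of `ω`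
starting at position `a`. -/
noncomputable def rankIn (ω : ℤ → ℤ) (a : ℤ) : ℕ :=
  sSup {r : ℕ | ∃ s : Fin r → ℤ, StrictMono s ∧ (∃ h : 0 < r, s ⟨0, h⟩ = a) ∧
    StrictAnti (fun j => ω (s j))}

/-!
Avoidance bounds the length of every decreasing subsequence by `k`, so the rank is a maximum
that is attained. Translating a decreasing subsequence by `N` gives another one, by periodicity,
which makes ranks `N`-periodic. If `a < a'` and `ω a' < ω a`, prepending `a` to a longest
decreasing subsequence starting at `a'` shows `rankIn ω a' < rankIn ω a`; hence equal ranks and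
injectivity of `ω` force `ω a < ω a'`.
-/

def decLengths (ω : ℤ → ℤ) (a : ℤ) : Set ℕ :=
  {r : ℕ | ∃ s : Fin r → ℤ, StrictMono s ∧ (∃ h : 0 < r, s ⟨0, h⟩ = a) ∧
    StrictAnti (fun j => ω (s j))}

lemma one_mem_decLengths (ω : ℤ → ℤ) (a : ℤ) : 1 ∈ decLengths ω a :=
  ⟨fun _ => a, Subsingleton.strictMono _, ⟨one_pos, rfl⟩, Subsingleton.strictAnti _⟩

lemma le_of_mem_decLengths {k : ℕ} {ω : ℤ → ℤ} (hav : AvoidsDec k ω) {a : ℤ} {r : ℕ}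
    (hr : r ∈ decLengths ω a) : r ≤ k := by
  by_contra! hkr
  obtain ⟨s, hs, -, hanti⟩ := hr
  have hcast : StrictMono (Fin.castLE hkr) := Fin.strictMono_castLE hkr
  exact hav ⟨s ∘ Fin.castLE hkr, hs.comp hcast, hanti.comp_strictMono hcast⟩

lemma bddAbove_decLengths {k : ℕ} {ω : ℤ → ℤ} (hav : AvoidsDec k ω) (a : ℤ) :
    BddAbove (decLengths ω a) :=
  ⟨k, fun _ => le_of_mem_decLengths hav⟩

lemma mem_decLengths_add {ω : ℤ → ℤ} {c : ℤ} (hc : ∀ i, ω (i + c) = ω i + c) {a : ℤ} {r : ℕ}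
    (hr : r ∈ decLengths ω a) : r ∈ decLengths ω (a + c) := by
  obtain ⟨s, hs, ⟨hpos, rfl⟩, hanti⟩ := hr
  refine ⟨(· + c) ∘ s, (strictMono_id.add_const c).comp hs, ⟨hpos, rfl⟩, fun i j hij => ?_⟩
  simpa only [Function.comp_apply, hc, add_lt_add_iff_right] using hanti hij

lemma decLengths_add {ω : ℤ → ℤ} {c : ℤ} (hc : ∀ i, ω (i + c) = ω i + c) (a : ℤ) :
    decLengths ω (a + c) = decLengths ω a := by
  have hc' : ∀ i, ω (i + -c) = ω i + -c := fun i => by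
    rw [eq_add_neg_iff_add_eq, ← hc, neg_add_cancel_right]
  refine Set.Subset.antisymm (fun r hr => ?_) (fun r => mem_decLengths_add hc)
  simpa using mem_decLengths_add hc' hr

lemma Fin.strictAnti_cons {α : Type*} [Preorder α] {n : ℕ} {f : Fin n → α} {a : α} :
    StrictAnti (Fin.cons a f : Fin (n + 1) → α) ↔ (∀ j, f j < a) ∧ StrictAnti f :=
  Fin.liftFun_cons (· > ·)

lemma succ_mem_decLengths {ω : ℤ → ℤ} {a a' : ℤ} (hlt : a < a') (hω : ω a' < ω a) {r : ℕ}
    (hr : r ∈ decLengths ω a') : r + 1 ∈ decLengths ω a := by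
  obtain ⟨s, hs, ⟨hpos, rfl⟩, hanti⟩ := hr
  have hfirst (j : Fin r) : (⟨0, hpos⟩ : Fin r) ≤ j := Nat.zero_le j.1
  refine ⟨Fin.cons a s, Fin.strictMono_cons.2 ⟨fun j => ?_, hs⟩, ⟨r.succ_pos, rfl⟩, ?_⟩
  · exact hlt.trans_le (hs.monotone (hfirst j))
  rw [← Function.comp_def, Fin.comp_cons]
  exact Fin.strictAnti_cons.2 ⟨fun j => (hanti.antitone (hfirst j)).trans_lt hω, hanti⟩

section rank

variable {k : ℕ} {ω : ℤ → ℤ}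

lemma rankIn_mem_decLengths (hav : AvoidsDec k ω) (a : ℤ) : rankIn ω a ∈ decLengths ω a :=
  Nat.sSup_mem ⟨1, one_mem_decLengths ω a⟩ (bddAbove_decLengths hav a)

lemma one_le_rankIn (hav : AvoidsDec k ω) (a : ℤ) : 1 ≤ rankIn ω a :=
  le_csSup (bddAbove_decLengths hav a) (one_mem_decLengths ω a)

lemma rankIn_le (hav : AvoidsDec k ω) (a : ℤ) : rankIn ω a ≤ k :=
  le_of_mem_decLengths hav (rankIn_mem_decLengths hav a)

lemma rankIn_lt_rankIn (hav : AvoidsDec k ω) {a a' : ℤ} (hlt : a < a') (hω : ω a' < ω a) :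
    rankIn ω a' < rankIn ω a :=
  le_csSup (bddAbove_decLengths hav a) (succ_mem_decLengths hlt hω (rankIn_mem_decLengths hav a'))

lemma rankIn_add {c : ℤ} (hc : ∀ i, ω (i + c) = ω i + c) (a : ℤ) :
    rankIn ω (a + c) = rankIn ω a :=
  congrArg sSup (decLengths_add hc a)

end rank

theorem stmt_3_general (N k : ℕ) (ω : ℤ → ℤ)
    (hω : IsAffinePerm N ω) (hav : AvoidsDec k ω) :
    (∀ a : ℤ, 1 ≤ rankIn ω a ∧ rankIn ω a ≤ k) ∧
    (∀ a : ℤ, rankIn ω (a + N) = rankIn ω a) ∧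
    (∀ a a' : ℤ, rankIn ω a = rankIn ω a' → a < a' → ω a < ω a') := by
  obtain ⟨⟨hinj, -⟩, hperiodic, -⟩ := hω
  refine ⟨fun a => ⟨one_le_rankIn hav a, rankIn_le hav a⟩, fun a => rankIn_add hperiodic a,
    fun a a' hrank hlt => ?_⟩
  have hle : ω a ≤ ω a' := not_lt.1 fun h => (rankIn_lt_rankIn hav hlt h).ne hrank.symm
  exact hle.lt_of_ne (hinj.ne hlt.ne)

/-- if ω avoids the decreasing pattern of size k+1, then ranks lie in [1,k],
ranks are N-periodic, and integers of a fixed rank form an increasing subsequence. -/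
theorem stmt_3 (N k : ℕ) (hk : 1 ≤ k) (ω : ℤ → ℤ)
    (hω : IsAffinePerm N ω) (hav : AvoidsDec k ω) :
    (∀ a : ℤ, 1 ≤ rankIn ω a ∧ rankIn ω a ≤ k) ∧
    (∀ a : ℤ, rankIn ω (a + N) = rankIn ω a) ∧
    (∀ a a' : ℤ, rankIn ω a = rankIn ω a' → a < a' → ω a < ω a') :=
  stmt_3_general N k ω hω hav
end

section
/- The number of bounded affine permutations of size N equals ∑_{m=0}^{N} C(N,m) ∑_{k=0}^{m} C(m, N−k) (−1)^{N−m} a(m,k), where a(m,k) is the Eulerian-type number counting permutations of size m with exactly k excedances. -/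
/-- A bounded affine permutation of size `N`. -/
def IsBoundedAffinePerm (N : ℕ) (σ : ℤ → ℤ) : Prop :=
  Function.Bijective σ ∧ (∀ i : ℤ, σ (i + N) = σ i + N) ∧
    (∑ i ∈ Finset.Icc (1 : ℤ) N, σ i = ∑ i ∈ Finset.Icc (1 : ℤ) N, i) ∧
    ∀ i : ℤ, |σ i - i| < N

/-- `eulerianExc m k` = number of permutations of `[m]` with exactly `k` excedances. -/
def eulerianExc (m k : ℕ) : ℕ :=
  ((Finset.univ : Finset (Equiv.Perm (Fin m))).filter
    (fun π => ((Finset.univ : Finset (Fin m)).filter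
      (fun i => i.1 < (π i).1)).card = k)).card

/-!
On the window `0 ≤ r < N` write `σ r = d r * N + π r` with `π r = σ r mod N`. Then `σ` is a
bounded affine permutation exactly when `π` is a permutation of `Fin N`, `d` takes the value `-1`
on a set `A` of excedances of `π`, the value `1` on a set `B` of anti-excedances, `0` elsewhere,
and `#A = #B`. By Vandermonde there are `C(#supp π, exc π)` such pairs `(A, B)`.

On the other side, the permutations of an `m`-subset `M ⊆ Fin N` are the permutations of `Fin N`
supported in `M`, with the same excedances. Exchanging the sums turns the right-hand side into
`∑ π, ∑ M ⊇ supp π, C(#M, N - exc π) * (-1) ^ (N - #M)`, and the inner sum is the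
`(N - #supp π)`-th forward difference of `x ↦ C(x, N - exc π)` at `#supp π`, which is
`C(#supp π, exc π)`.
-/

open Finset Function Equiv

lemma sum_range_neg_one_pow_mul_choose_mul_choose_add (n s j : ℕ) :
    ∑ t ∈ range (n + 1), (-1 : ℤ) ^ (n - t) * n.choose t * (s + t).choose (n + j) =
      s.choose j := by
  have h := fwdDiff_iter_eq_sum_shift (h := 1) (fun x : ℕ ↦ ((x.choose (n + j) : ℕ) : ℤ)) n s
  rw [fwdDiff_iter_choose] at h
  simpa using h.symm

lemma Finset.sum_Icc_apply_card {α M : Type*} [DecidableEq α] [AddCommMonoid M]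
    {s t : Finset α} (hst : s ⊆ t) (f : ℕ → M) :
    ∑ u ∈ Icc s t, f #u = ∑ i ∈ range (#t - #s + 1), (#t - #s).choose i • f (#s + i) := by
  have hdisj : ∀ u ∈ (t \ s).powerset, Disjoint s u :=
    fun u hu ↦ disjoint_sdiff.mono_right (mem_powerset.1 hu)
  rw [Icc_eq_image_powerset hst, sum_image, ← card_sdiff_of_subset hst,
    ← sum_powerset_apply_card]
  · exact sum_congr rfl fun u hu ↦ by rw [card_union_of_disjoint (hdisj u hu)]
  · intro u hu v hv huv
    rw [← union_sdiff_cancel_left (hdisj u hu), show s ∪ u = s ∪ v from huv,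
      union_sdiff_cancel_left (hdisj v hv)]

lemma Finset.sum_Icc_choose_mul_neg_one_pow {α : Type*} [DecidableEq α] {s t : Finset α}
    (hst : s ⊆ t) {k : ℕ} (hk : k ≤ #s) :
    ∑ u ∈ Icc s t, ((#u).choose (#t - k) : ℤ) * (-1) ^ (#t - #u) = (#s).choose k := by
  have hs : #s ≤ #t := card_le_card hst
  rw [sum_Icc_apply_card hst fun m ↦ (m.choose (#t - k) : ℤ) * (-1) ^ (#t - m),
    ← Nat.choose_symm hk, ← sum_range_neg_one_pow_mul_choose_mul_choose_add (#t - #s)]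
  refine sum_congr rfl fun i hi ↦ ?_
  rw [mem_range] at hi
  rw [nsmul_eq_mul, show #t - (#s + i) = #t - #s - i by omega,
    show #t - k = #t - #s + (#s - k) by omega]
  ring

lemma Nat.sum_range_choose_mul_choose (m n : ℕ) :
    ∑ j ∈ range (m + 1), m.choose j * n.choose j = (m + n).choose m := by
  rw [add_choose_eq, ← Nat.sum_antidiagonal_swap, Nat.sum_antidiagonal_eq_sum_range_succ_mk]
  refine sum_congr rfl fun j hj ↦ ?_
  rw [Prod.fst_swap, Prod.snd_swap, choose_symm (mem_range_succ_iff.1 hj)]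

lemma Finset.card_filter_card_eq_powerset_product {α : Type*} [DecidableEq α]
    (E F : Finset α) : #{p ∈ E.powerset ×ˢ F.powerset | #p.1 = #p.2} = (#E + #F).choose #E := by
  rw [← Nat.sum_range_choose_mul_choose, card_eq_sum_card_fiberwise (f := fun p ↦ #p.1)
    (t := range (#E + 1)) fun p hp ↦ ?_]
  · refine sum_congr rfl fun j _ ↦ ?_
    rw [← card_powersetCard j E, ← card_powersetCard j F, ← card_product]
    congr 1
    ext ⟨A, B⟩
    simp only [mem_filter, mem_product, mem_powerset, mem_powersetCard]
    constructor
    · rintro ⟨⟨⟨hA, hB⟩, hAB⟩, rfl⟩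
      exact ⟨⟨hA, rfl⟩, hB, hAB.symm⟩
    · rintro ⟨⟨hA, rfl⟩, hB, hBA⟩
      exact ⟨⟨⟨hA, hB⟩, hBA.symm⟩, rfl⟩
  · rw [mem_coe, mem_filter, mem_product, mem_powerset] at hp
    exact mem_range_succ_iff.2 (card_le_card hp.1.1)

namespace Equiv.Perm

variable {α β : Type*} [LinearOrder α] [Fintype α] [LinearOrder β] [Fintype β]

def excedances (π : Perm α) : Finset α := {i | i < π i}

def antiexcedances (π : Perm α) : Finset α := {i | π i < i}

lemma disjoint_excedances_antiexcedances (π : Perm α) :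
    _root_.Disjoint π.excedances π.antiexcedances := by
  simp only [excedances, antiexcedances, disjoint_filter]
  exact fun i _ h ↦ h.not_gt

lemma excedances_union_antiexcedances (π : Perm α) :
    π.excedances ∪ π.antiexcedances = π.support := by
  ext i
  simp [excedances, antiexcedances, ne_comm]

lemma card_support_eq_card_excedances_add (π : Perm α) :
    #π.support = #π.excedances + #π.antiexcedances := by
  rw [← excedances_union_antiexcedances, card_union_of_disjoint
    (disjoint_excedances_antiexcedances π)]

lemma card_excedances_le_card_support (π : Perm α) : #π.excedances ≤ #π.support := by
  rw [card_support_eq_card_excedances_add]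
  exact Nat.le_add_right _ _

lemma excedances_permCongr (e : α ≃o β) (π : Perm α) :
    (e.toEquiv.permCongr π).excedances = π.excedances.map e.toEquiv.toEmbedding := by
  ext x
  obtain ⟨y, rfl⟩ := e.surjective x
  rw [excedances, excedances, mem_map_equiv, mem_filter, mem_filter]
  simp

lemma excedances_ofSubtype (s : Finset α) (π : Perm s) :
    (ofSubtype π).excedances = π.excedances.map (Embedding.subtype (· ∈ s)) := by
  ext x
  by_cases hx : x ∈ s
  · simp [excedances, ofSubtype_apply_of_mem π hx, hx, ← Subtype.coe_lt_coe]
  · simp [excedances, ofSubtype_apply_of_not_mem π hx, hx]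

lemma sum_card_excedances_fin_eq_sum_support_subset {M : Type*} [AddCommMonoid M]
    (s : Finset α) (f : ℕ → M) :
    ∑ π : Perm (Fin #s), f #π.excedances = ∑ π : Perm α with π.support ⊆ s, f #π.excedances := by
  rw [sum_subtype _ (p := fun π : Perm α ↦ ∀ a, a ∉ s → π a = a) fun π ↦ by
    simp [subset_iff, not_imp_comm]]
  refine Fintype.sum_equiv ((permCongr (s.orderIsoOfFin rfl).toEquiv).trans
    (Perm.subtypeEquivSubtypePerm (· ∈ s))) _ _ fun π ↦ ?_
  simp [excedances_ofSubtype, excedances_permCongr]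

def admissiblePairs (π : Perm α) : Finset (Finset α × Finset α) :=
  {p ∈ π.excedances.powerset ×ˢ π.antiexcedances.powerset | #p.1 = #p.2}

lemma mem_admissiblePairs {π : Perm α} {A B : Finset α} :
    (A, B) ∈ π.admissiblePairs ↔ A ⊆ π.excedances ∧ B ⊆ π.antiexcedances ∧ #A = #B := by
  simp [admissiblePairs, and_assoc]

lemma disjoint_of_mem_admissiblePairs {π : Perm α} {A B : Finset α}
    (h : (A, B) ∈ π.admissiblePairs) : _root_.Disjoint A B := by
  rw [mem_admissiblePairs] at h
  exact (disjoint_excedances_antiexcedances π).mono h.1 h.2.1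

lemma card_admissiblePairs (π : Perm α) :
    #π.admissiblePairs = (#π.support).choose #π.excedances := by
  rw [admissiblePairs, card_filter_card_eq_powerset_product,
    card_support_eq_card_excedances_add]

end Equiv.Perm

lemma eulerianExc_eq_card (m k : ℕ) :
    eulerianExc m k = #{π : Perm (Fin m) | #π.excedances = k} :=
  rfl

lemma sum_mul_eulerianExc (m : ℕ) (f : ℕ → ℤ) :
    ∑ k ∈ range (m + 1), f k * eulerianExc m k = ∑ π : Perm (Fin m), f #π.excedances := by
  rw [← sum_fiberwise_of_maps_to (g := fun π : Perm (Fin m) ↦ #π.excedances)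
    (t := range (m + 1)) fun π _ ↦
      mem_range_succ_iff.2 ((card_le_univ _).trans_eq (Fintype.card_fin m))]
  refine sum_congr rfl fun k _ ↦ ?_
  rw [sum_congr rfl fun π hπ ↦ congrArg f (mem_filter.1 hπ).2, sum_const, nsmul_eq_mul,
    eulerianExc_eq_card, mul_comm]

theorem sum_choose_mul_sum_eulerianExc (N : ℕ) :
    ∑ m ∈ range (N + 1), (N.choose m : ℤ) *
        ∑ k ∈ range (m + 1), (m.choose (N - k) : ℤ) * (-1) ^ (N - m) * (eulerianExc m k : ℤ) =
      ∑ π : Perm (Fin N), ((#π.support).choose #π.excedances : ℤ) := by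
  calc _ = ∑ M : Finset (Fin N), ∑ π : Perm (Fin #M),
          ((#M).choose (N - #π.excedances) : ℤ) * (-1) ^ (N - #M) := by
        rw [← powerset_univ, sum_powerset_apply_card fun m ↦ ∑ π : Perm (Fin m),
          (m.choose (N - #π.excedances) : ℤ) * (-1) ^ (N - m), card_univ, Fintype.card_fin]
        exact sum_congr rfl fun m _ ↦ by rw [sum_mul_eulerianExc, nsmul_eq_mul]
    _ = ∑ M : Finset (Fin N), ∑ π : Perm (Fin N) with π.support ⊆ M,
          ((#M).choose (N - #π.excedances) : ℤ) * (-1) ^ (N - #M) :=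
        sum_congr rfl fun M _ ↦ Perm.sum_card_excedances_fin_eq_sum_support_subset M
          fun k ↦ ((#M).choose (N - k) : ℤ) * (-1) ^ (N - #M)
    _ = ∑ π : Perm (Fin N), ∑ M ∈ Icc π.support univ,
          ((#M).choose (N - #π.excedances) : ℤ) * (-1) ^ (N - #M) :=
        sum_comm' fun M π ↦ by simp [mem_Icc]
    _ = _ := sum_congr rfl fun π _ ↦ by
        simpa using sum_Icc_choose_mul_neg_one_pow (subset_univ π.support)
          π.card_excedances_le_card_support

section SignedIndicator
variable {ι : Type*} [DecidableEq ι] {A B : Finset ι} {r : ι}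

def signedIndicator (A B : Finset ι) (r : ι) : ℤ :=
  if r ∈ A then -1 else if r ∈ B then 1 else 0

lemma signedIndicator_eq_neg_one_iff : signedIndicator A B r = -1 ↔ r ∈ A := by
  unfold signedIndicator
  split_ifs <;> simp_all

lemma signedIndicator_eq_one_iff (h : Disjoint A B) : signedIndicator A B r = 1 ↔ r ∈ B := by
  by_cases hA : r ∈ A
  · simp [signedIndicator, hA, disjoint_left.1 h hA]
  · simp [signedIndicator, hA]

lemma sum_signedIndicator [Fintype ι] (h : Disjoint A B) :
    ∑ r, signedIndicator A B r = #B - #A := by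
  have hpt : ∀ r, signedIndicator A B r = (if r ∈ B then 1 else 0) - (if r ∈ A then 1 else 0) := by
    intro r
    by_cases hA : r ∈ A
    · simp [signedIndicator, hA, disjoint_left.1 h hA]
    · simp [signedIndicator, hA]
  simp [hpt, sum_sub_distrib]

end SignedIndicator

lemma bijective_shear_iff {G β : Type*} [AddGroup G] (d : β → G) (π : β → β) :
    Bijective (fun p : G × β ↦ (p.1 + d p.2, π p.2)) ↔ Bijective π := by
  constructor
  · rintro ⟨hinj, hsurj⟩
    refine ⟨fun b b' h ↦ ?_, fun c ↦ ?_⟩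
    · have := @hinj (-d b, b) (-d b', b') (by simp [h])
      exact (Prod.ext_iff.1 this).2
    · obtain ⟨p, hp⟩ := hsurj (0, c)
      exact ⟨p.2, (Prod.ext_iff.1 hp).2⟩
  · rintro ⟨hinj, hsurj⟩
    refine ⟨fun p p' h ↦ ?_, fun y ↦ ?_⟩
    · obtain ⟨h1, h2⟩ := Prod.ext_iff.1 h
      have h2 := hinj h2
      simp only [h2, add_left_inj] at h1
      exact Prod.ext h1 h2
    · obtain ⟨b, hb⟩ := hsurj y.2
      exact ⟨(y.1 - d b, b), by simp [hb]⟩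

lemma Int.sum_Icc_one_eq_sum_fin {M : Type*} [AddCancelCommMonoid M] (N : ℕ) (h : ℤ → M)
    (hh : ∀ i, h (i + N) = h i) : ∑ i ∈ Icc (1 : ℤ) N, h i = ∑ r : Fin N, h r := by
  rw [Int.Icc_eq_finset_map, sum_map, Fin.sum_univ_eq_sum_range (fun n ↦ h n)]
  simp only [add_sub_cancel_right, toNat_natCast, Embedding.trans_apply, Nat.castEmbedding_apply,
    addLeftEmbedding_apply]
  have := (sum_range_succ' (fun n : ℕ ↦ h n) N).symm.trans (sum_range_succ _ N)
  rw [show h N = h 0 by simpa using hh 0] at this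
  simpa [add_comm (1 : ℤ)] using add_right_cancel this

lemma apply_mul_add_of_apply_add {N : ℕ} {σ : ℤ → ℤ} (hσ : ∀ i, σ (i + N) = σ i + N) (q i : ℤ) :
    σ (q * N + i) = q * N + σ i := by
  have hper : Periodic (fun i ↦ σ i - i) N := fun i ↦ by simp [hσ]
  have := hper.int_mul q i
  rw [Int.cast_id] at this
  rw [add_comm (q * N) i]
  linarith

section PeriodicExtension
variable {N : ℕ} [NeZero N]

lemma Int.divModEquiv_mul_add (q : ℤ) (r : Fin N) : Int.divModEquiv N (q * N + r) = (q, r) := by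
  have := (Int.divModEquiv N).apply_symm_apply (q, r)
  rwa [Int.divModEquiv_symm_apply] at this

lemma Int.exists_eq_mul_add (i : ℤ) : ∃ (q : ℤ) (r : Fin N), i = q * N + r :=
  ⟨_, _, ((Int.divModEquiv N).symm_apply_apply i).symm.trans (Int.divModEquiv_symm_apply _ _)⟩

def periodicExt (g : Fin N → ℤ) (i : ℤ) : ℤ :=
  (Int.divModEquiv N i).1 * N + g (Int.divModEquiv N i).2

lemma periodicExt_mul_add (g : Fin N → ℤ) (q : ℤ) (r : Fin N) :
    periodicExt g (q * N + r) = q * N + g r := by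
  rw [periodicExt, Int.divModEquiv_mul_add]

lemma periodicExt_coe (g : Fin N → ℤ) (r : Fin N) : periodicExt g r = g r := by
  simpa using periodicExt_mul_add g 0 r

lemma periodicExt_add (g : Fin N → ℤ) (i : ℤ) : periodicExt g (i + N) = periodicExt g i + N := by
  obtain ⟨q, r, rfl⟩ := Int.exists_eq_mul_add (N := N) i
  rw [show q * N + r + N = (q + 1) * N + r by ring, periodicExt_mul_add, periodicExt_mul_add]
  ring

lemma eq_periodicExt {σ : ℤ → ℤ} (hσ : ∀ i, σ (i + N) = σ i + N) :
    σ = periodicExt fun r : Fin N ↦ σ r := by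
  funext i
  obtain ⟨q, r, rfl⟩ := Int.exists_eq_mul_add (N := N) i
  rw [periodicExt_mul_add, apply_mul_add_of_apply_add hσ]

/-- Under `i ↦ (i / N, i % N)`, `periodicExt g` is the shear
`(q, r) ↦ (q + g r / N, g r % N)`. -/
lemma bijective_periodicExt_iff (g : Fin N → ℤ) :
    Bijective (periodicExt g) ↔ Bijective fun r ↦ (Int.divModEquiv N (g r)).2 := by
  let e := Int.divModEquiv N
  have : periodicExt g = e.symm ∘ (fun p ↦ (p.1 + (e (g p.2)).1, (e (g p.2)).2)) ∘ e := by
    funext i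
    have hg := e.symm_apply_apply (g (e i).2)
    simp only [e, Int.divModEquiv_symm_apply] at hg
    simp only [periodicExt, comp_apply, Int.divModEquiv_symm_apply, e]
    linarith
  rw [this, Equiv.comp_bijective, Equiv.bijective_comp]
  exact bijective_shear_iff (fun r ↦ (e (g r)).1) fun r ↦ (e (g r)).2

lemma abs_periodicExt_sub_lt_iff (g : Fin N → ℤ) :
    (∀ i, |periodicExt g i - i| < N) ↔ ∀ r : Fin N, |g r - r| < N := by
  refine ⟨fun h r ↦ by simpa [periodicExt_coe] using h r, fun h i ↦ ?_⟩
  obtain ⟨q, r, rfl⟩ := Int.exists_eq_mul_add (N := N) i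
  simpa [periodicExt_mul_add] using h r

def IsBoundedAffineWindow (g : Fin N → ℤ) : Prop :=
  Bijective (fun r ↦ (Int.divModEquiv N (g r)).2) ∧ ∑ r, (g r - r) = 0 ∧
    ∀ r : Fin N, |g r - r| < N

lemma isBoundedAffinePerm_periodicExt_iff (g : Fin N → ℤ) :
    IsBoundedAffinePerm N (periodicExt g) ↔ IsBoundedAffineWindow g := by
  rw [IsBoundedAffinePerm, IsBoundedAffineWindow, bijective_periodicExt_iff,
    abs_periodicExt_sub_lt_iff, ← sub_eq_zero, ← sum_sub_distrib,
    Int.sum_Icc_one_eq_sum_fin N _ fun i ↦ by rw [periodicExt_add]; ring]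
  simp [periodicExt_coe, periodicExt_add]

end PeriodicExtension

section Window
variable {N : ℕ}

lemma abs_mul_add_sub_lt_iff (q : ℤ) (a b : Fin N) :
    |q * N + a - b| < N ↔ q = 0 ∨ q = -1 ∧ b < a ∨ q = 1 ∧ a < b := by
  have ha := a.isLt
  have hb := b.isLt
  rw [Fin.lt_def, Fin.lt_def, abs_lt]
  constructor
  · rintro ⟨h₁, h₂⟩
    have hq₁ : -2 < q := by nlinarith
    have hq₂ : q < 2 := by nlinarith
    interval_cases q <;> omega
  · rintro (rfl | ⟨rfl, h⟩ | ⟨rfl, h⟩) <;> omega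

def windowOf (π : Perm (Fin N)) (A B : Finset (Fin N)) (r : Fin N) : ℤ :=
  signedIndicator A B r * N + π r

lemma divModEquiv_windowOf [NeZero N] (π : Perm (Fin N)) (A B : Finset (Fin N)) (r : Fin N) :
    Int.divModEquiv N (windowOf π A B r) = (signedIndicator A B r, π r) :=
  Int.divModEquiv_mul_add _ _

lemma sum_windowOf_sub {π : Perm (Fin N)} {A B : Finset (Fin N)} (h : Disjoint A B) :
    ∑ r, (windowOf π A B r - r) = (#B - #A) * N := by
  simp only [windowOf, add_sub_assoc, sum_add_distrib, ← sum_mul, sum_signedIndicator h,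
    sum_sub_distrib, Equiv.sum_comp π (fun r : Fin N ↦ (r : ℤ)), sub_self, add_zero]

lemma isBoundedAffineWindow_windowOf [NeZero N] {π : Perm (Fin N)} {A B : Finset (Fin N)}
    (h : (A, B) ∈ π.admissiblePairs) : IsBoundedAffineWindow (windowOf π A B) := by
  have hdisj := Perm.disjoint_of_mem_admissiblePairs h
  rw [Perm.mem_admissiblePairs] at h
  obtain ⟨hA, hB, hcard⟩ := h
  refine ⟨by simpa only [divModEquiv_windowOf] using π.bijective,
    by simp [sum_windowOf_sub hdisj, hcard],
    fun r ↦ (abs_mul_add_sub_lt_iff _ _ _).2 ?_⟩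
  by_cases hrA : r ∈ A
  · have := hA hrA
    simp_all [signedIndicator, Perm.excedances]
  by_cases hrB : r ∈ B
  · have := hB hrB
    simp_all [signedIndicator, Perm.antiexcedances]
  · simp [signedIndicator, hrA, hrB]

lemma windowOf_inj [NeZero N] {π π' : Perm (Fin N)} {A B A' B' : Finset (Fin N)}
    (h : (A, B) ∈ π.admissiblePairs) (h' : (A', B') ∈ π'.admissiblePairs)
    (he : windowOf π A B = windowOf π' A' B') : π = π' ∧ A = A' ∧ B = B' := by
  have hr (r : Fin N) := congrArg (Int.divModEquiv N) (congrFun he r)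
  simp only [divModEquiv_windowOf, Prod.mk.injEq] at hr
  refine ⟨Equiv.ext fun r ↦ (hr r).2, ?_, ?_⟩ <;> ext r
  · rw [← signedIndicator_eq_neg_one_iff, (hr r).1, signedIndicator_eq_neg_one_iff]
  · rw [← signedIndicator_eq_one_iff (Perm.disjoint_of_mem_admissiblePairs h), (hr r).1,
      signedIndicator_eq_one_iff (Perm.disjoint_of_mem_admissiblePairs h')]

lemma exists_windowOf_eq [NeZero N] {g : Fin N → ℤ} (hg : IsBoundedAffineWindow g) :
    ∃ (π : Perm (Fin N)) (A B : Finset (Fin N)),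
      (A, B) ∈ π.admissiblePairs ∧ windowOf π A B = g := by
  obtain ⟨hbij, hsum, hbd⟩ := hg
  set π := Equiv.ofBijective _ hbij
  set d := fun r ↦ (Int.divModEquiv N (g r)).1
  have hg (r : Fin N) : g r = d r * N + π r :=
    ((Int.divModEquiv N).symm_apply_apply (g r)).symm.trans (Int.divModEquiv_symm_apply _ _)
  have hd (r : Fin N) := (abs_mul_add_sub_lt_iff (d r) (π r) r).1 (hg r ▸ hbd r)
  set A : Finset (Fin N) := {r | d r = -1}
  set B : Finset (Fin N) := {r | d r = 1}
  have hdisj : Disjoint A B := disjoint_filter.2 fun r _ h ↦ by rw [h]; decide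
  have hwin : windowOf π A B = g := by
    funext r
    rw [hg, windowOf]
    congr
    rcases hd r with h | ⟨h, _⟩ | ⟨h, _⟩ <;> simp [signedIndicator, A, B, h]
  refine ⟨π, A, B, Perm.mem_admissiblePairs.2 ⟨fun r hr ↦ ?_, fun r hr ↦ ?_, ?_⟩, hwin⟩
  · rw [mem_filter] at hr
    rcases hd r with h | ⟨_, h⟩ | ⟨h, _⟩ <;> simp_all [Perm.excedances]
  · rw [mem_filter] at hr
    rcases hd r with h | ⟨h, _⟩ | ⟨_, h⟩ <;> simp_all [Perm.antiexcedances]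
  · rw [← hwin, sum_windowOf_sub hdisj] at hsum
    have := (mul_eq_zero.1 hsum).resolve_right (Int.natCast_ne_zero.2 (NeZero.ne N))
    omega

end Window

def admissibleTriples (N : ℕ) : Finset (Σ _ : Perm (Fin N), Finset (Fin N) × Finset (Fin N)) :=
  univ.sigma fun π ↦ π.admissiblePairs

def affinePermOf (N : ℕ) [NeZero N] (x : Σ _ : Perm (Fin N), Finset (Fin N) × Finset (Fin N)) :
    ℤ → ℤ :=
  periodicExt (windowOf x.1 x.2.1 x.2.2)

section Count
variable {N : ℕ} [NeZero N]

lemma isBoundedAffinePerm_iff_mem_image (σ : ℤ → ℤ) :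
    IsBoundedAffinePerm N σ ↔ σ ∈ affinePermOf N '' admissibleTriples N := by
  simp only [Set.mem_image, mem_coe, admissibleTriples, mem_sigma, mem_univ, true_and,
    Sigma.exists, Prod.exists, affinePermOf]
  constructor
  · intro hσ
    have hσ' := hσ
    rw [eq_periodicExt hσ.2.1, isBoundedAffinePerm_periodicExt_iff] at hσ'
    obtain ⟨π, A, B, hAB, hwin⟩ := exists_windowOf_eq hσ'
    exact ⟨π, A, B, hAB, by rw [hwin, ← eq_periodicExt hσ.2.1]⟩
  · rintro ⟨π, A, B, hAB, rfl⟩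
    exact (isBoundedAffinePerm_periodicExt_iff _).2 (isBoundedAffineWindow_windowOf hAB)

lemma injOn_affinePermOf : Set.InjOn (affinePermOf N) (admissibleTriples N) := by
  rintro ⟨π, A, B⟩ hx ⟨π', A', B'⟩ hx' he
  simp only [mem_coe, admissibleTriples, mem_sigma, mem_univ, true_and] at hx hx'
  have hwin : windowOf π A B = windowOf π' A' B' := by
    funext r
    simpa [affinePermOf, periodicExt_coe] using congrFun he r
  obtain ⟨rfl, rfl, rfl⟩ := windowOf_inj hx hx' hwin
  rfl

theorem natCard_isBoundedAffinePerm :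
    Nat.card {σ : ℤ → ℤ // IsBoundedAffinePerm N σ} =
      ∑ π : Perm (Fin N), (#π.support).choose #π.excedances := by
  rw [Nat.card_congr (Equiv.subtypeEquivRight isBoundedAffinePerm_iff_mem_image),
    Nat.card_image_of_injOn injOn_affinePermOf,
    Nat.card_coe_set_eq, Set.ncard_coe_finset, admissibleTriples, card_sigma]
  simp [Perm.card_admissiblePairs]

end Count

/-- exact enumeration of bounded affine permutations of size N. -/
theorem stmt_5 (N : ℕ) (hN : 0 < N) :
    (Nat.card {σ : ℤ → ℤ // IsBoundedAffinePerm N σ} : ℤ) =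
      ∑ m ∈ Finset.range (N + 1), (N.choose m : ℤ) *
        ∑ k ∈ Finset.range (m + 1),
          (m.choose (N - k) : ℤ) * (-1) ^ (N - m) * (eulerianExc m k : ℤ) := by
  have : NeZero N := ⟨hN.ne'⟩
  rw [sum_choose_mul_sum_eulerianExc]
  exact_mod_cast natCard_isBoundedAffinePerm
end

section
/- Fix an integer k ≥ 2 and α ∈ (0, 1/k). For every N, the sum of C(N; n_1,…,n_k)² over all tuples (n_1,…,n_k) of nonnegative integers with n_1+⋯+n_k = N and |n_i − N/k| > αN for some i, is at most 4 k^{2N+2} e^{−4Nα²}. -/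
open scoped Classical

/-!
Chernoff's method with Hoeffding's lemma. Fix a coordinate `i`. By the multinomial theorem
`∑_f C(N; f) x^{f i} = (x + k - 1)^N`, and Hoeffding's lemma for a Bernoulli(1/k) variable gives
`e^t + k - 1 ≤ k e^{t/k + t²/8}`. Taking `x = e^{±t}` with `t = 4α` (the minimiser of
`N t²/8 - αN t`) bounds the total multinomial weight of the tuples with `|f i - N/k| > αN` by
`2 k^N e^{-2Nα²}`; a union bound over the `k` coordinates and `∑ a² ≤ (∑ a)²` for nonnegative
terms then give the claim.
-/

open Finset Real MeasureTheory ProbabilityTheory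

theorem bernoulli_mgf_le {p : ℝ} (hp0 : 0 ≤ p) (hp1 : p ≤ 1) (t : ℝ) :
    1 - p + p * exp t ≤ exp (t * p + t ^ 2 / 8) := by
  set μ : Measure Bool := bernoulliMeasure true false ⟨p, hp0, hp1⟩
  set X : Bool → ℝ := fun b => if b then 1 else 0
  have hmean : μ[X] = p := by simp [μ, X, integral_bernoulliMeasure]
  have hoeffding := (hasSubgaussianMGF_of_mem_Icc (μ := μ) (a := 0) (b := 1)
    (Measurable.of_discrete (f := X)).aemeasurable
    (ae_of_all _ fun b => by cases b <;> simp [X])).mgf_le t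
  simp only [mgf, hmean, integral_bernoulliMeasure, μ, X, ↓reduceIte, Bool.false_eq_true,
    smul_eq_mul, zero_sub, mul_neg, sub_zero, nnnorm_one, NNReal.coe_div, NNReal.coe_one,
    NNReal.coe_pow, NNReal.coe_ofNat] at hoeffding
  calc 1 - p + p * exp t
      = (p * exp (t * (1 - p)) + (1 - p) * exp (-(t * p))) * exp (t * p) := by
        rw [add_mul, mul_assoc, mul_assoc, ← exp_add, ← exp_add]
        ring_nf
        simp only [exp_zero, mul_one]
        ring
    _ ≤ exp (t ^ 2 / 8) * exp (t * p) := by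
        gcongr
        exact hoeffding.trans_eq (by ring_nf)
    _ = exp (t * p + t ^ 2 / 8) := by rw [← exp_add, add_comm]

theorem exp_add_sub_one_pow_le {c : ℝ} (hc : 1 ≤ c) (t : ℝ) (N : ℕ) :
    (exp t + (c - 1)) ^ N ≤ c ^ N * exp (N * (t / c + t ^ 2 / 8)) := by
  have hc0 : 0 < c := by linarith
  have hmgf : exp t + (c - 1) ≤ c * exp (t / c + t ^ 2 / 8) :=
    calc exp t + (c - 1) = c * (1 - c⁻¹ + c⁻¹ * exp t) := by field_simp; ring
      _ ≤ c * exp (t / c + t ^ 2 / 8) := by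
        rw [div_eq_mul_inv]
        gcongr
        exact bernoulli_mgf_le (inv_nonneg.2 hc0.le) (inv_le_one_of_one_le₀ hc) t
  calc (exp t + (c - 1)) ^ N ≤ (c * exp (t / c + t ^ 2 / 8)) ^ N := by
        gcongr
    _ = c ^ N * exp (N * (t / c + t ^ 2 / 8)) := by rw [mul_pow, ← exp_nat_mul]

theorem sum_antidiagonalTuple_multinomial_mul_pow {R : Type*} [CommRing R] (k N : ℕ) (i : Fin k)
    (x : R) :
    ∑ f ∈ Nat.antidiagonalTuple k N, (Nat.multinomial univ f : R) * x ^ f i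
      = (x + (k - 1)) ^ N := by
  have hsum : ∑ j : Fin k, (if j = i then x else 1) = x + (k - 1) := by
    rw [← add_sum_erase _ _ (mem_univ i), sum_congr rfl fun j hj => if_neg (ne_of_mem_erase hj)]
    simp [card_erase_of_mem, Nat.cast_sub i.pos]
  rw [← hsum, sum_pow_eq_sum_piAntidiag, piAntidiag_univ_fin_eq_antidiagonalTuple]
  refine sum_congr rfl fun f _ => ?_
  rw [prod_eq_single i (fun j _ hj => by simp [hj]) (by simp)]
  simp

theorem sum_multinomial_filter_le_exp (k N : ℕ) (i : Fin k) (t s : ℝ) :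
    ∑ f ∈ Nat.antidiagonalTuple k N with t * s ≤ t * f i, (Nat.multinomial univ f : ℝ)
      ≤ k ^ N * exp (N * (t / k + t ^ 2 / 8) - t * s) := by
  have hk : (1 : ℝ) ≤ k := by exact_mod_cast i.pos
  calc ∑ f ∈ Nat.antidiagonalTuple k N with t * s ≤ t * f i, (Nat.multinomial univ f : ℝ)
      ≤ ∑ f ∈ Nat.antidiagonalTuple k N with t * s ≤ t * f i,
          (Nat.multinomial univ f : ℝ) * exp (t * f i - t * s) := by
        refine sum_le_sum fun f hf => le_mul_of_one_le_right (by positivity) (one_le_exp ?_)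
        linarith [(mem_filter.1 hf).2]
    _ ≤ ∑ f ∈ Nat.antidiagonalTuple k N, (Nat.multinomial univ f : ℝ) * exp (t * f i - t * s) :=
        sum_le_sum_of_subset_of_nonneg (filter_subset _ _) fun _ _ _ => by positivity
    _ = (∑ f ∈ Nat.antidiagonalTuple k N, (Nat.multinomial univ f : ℝ) * exp t ^ f i)
          * exp (-(t * s)) := by
        rw [sum_mul]
        refine sum_congr rfl fun f _ => ?_
        rw [← exp_nat_mul, mul_assoc, ← exp_add]
        ring_nf
    _ = (exp t + (k - 1)) ^ N * exp (-(t * s)) := by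
        rw [sum_antidiagonalTuple_multinomial_mul_pow]
    _ ≤ k ^ N * exp (N * (t / k + t ^ 2 / 8)) * exp (-(t * s)) := by
        gcongr
        exact exp_add_sub_one_pow_le hk t N
    _ = k ^ N * exp (N * (t / k + t ^ 2 / 8) - t * s) := by
        rw [mul_assoc, ← exp_add, sub_eq_add_neg]

section UnionBound

variable {ι α M : Type*} [AddCommMonoid M] [PartialOrder M] [IsOrderedAddMonoid M]
  {s : Finset α} {g : α → M}

theorem sum_filter_le_sum_filter_add_sum_filter {P Q R : α → Prop} [DecidablePred P]
    [DecidablePred Q] [DecidablePred R] (hg : ∀ a ∈ s, 0 ≤ g a)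
    (h : ∀ a ∈ s, P a → Q a ∨ R a) :
    ∑ a ∈ s with P a, g a ≤ ∑ a ∈ s with Q a, g a + ∑ a ∈ s with R a, g a := by
  simp only [sum_filter, ← sum_add_distrib]
  refine sum_le_sum fun a ha => ?_
  have hite : ∀ (S : Prop) [Decidable S], 0 ≤ if S then g a else 0 :=
    fun _ _ => ite_nonneg (hg a ha) le_rfl
  by_cases hP : P a
  · rcases h a ha hP with hQ | hR
    · rw [if_pos hP, if_pos hQ]
      exact le_add_of_nonneg_right (hite _)
    · rw [if_pos hP, if_pos hR]
      exact le_add_of_nonneg_left (hite _)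
  · rw [if_neg hP]
    exact add_nonneg (hite _) (hite _)

theorem sum_filter_le_sum_sum_filter (I : Finset ι) {P : α → Prop} {Q : ι → α → Prop}
    [DecidablePred P] [∀ i, DecidablePred (Q i)] (hg : ∀ a ∈ s, 0 ≤ g a)
    (h : ∀ a ∈ s, P a → ∃ i ∈ I, Q i a) :
    ∑ a ∈ s with P a, g a ≤ ∑ i ∈ I, ∑ a ∈ s with Q i a, g a := by
  have hQ : ∀ a ∈ s, ∀ i, 0 ≤ if Q i a then g a else 0 :=
    fun a ha _ => ite_nonneg (hg a ha) le_rfl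
  simp only [sum_filter]
  rw [sum_comm]
  refine sum_le_sum fun a ha => ?_
  split_ifs with hP
  · obtain ⟨i, hi, hQi⟩ := h a ha hP
    calc g a = if Q i a then g a else 0 := by rw [if_pos hQi]
      _ ≤ ∑ j ∈ I, if Q j a then g a else 0 := single_le_sum (fun j _ => hQ a ha j) hi
  · exact sum_nonneg fun j _ => hQ a ha j

end UnionBound

theorem sum_multinomial_filter_abs_sub_gt_le (k N : ℕ) (i : Fin k) {α : ℝ} (hα : 0 ≤ α) :
    ∑ f ∈ Nat.antidiagonalTuple k N with |(f i : ℝ) - N / k| > α * N,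
        (Nat.multinomial univ f : ℝ)
      ≤ 2 * k ^ N * exp (-2 * N * α ^ 2) := by
  have hk : (0 : ℝ) < k := by exact_mod_cast i.pos
  have hupper := sum_multinomial_filter_le_exp k N i (4 * α) (N / k + α * N)
  have hlower := sum_multinomial_filter_le_exp k N i (-(4 * α)) (N / k - α * N)
  have hexp_upper : N * (4 * α / k + (4 * α) ^ 2 / 8) - 4 * α * (N / k + α * N)
      = -2 * N * α ^ 2 := by field_simp; ring
  have hexp_lower : N * (-(4 * α) / k + (-(4 * α)) ^ 2 / 8) - -(4 * α) * (N / k - α * N)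
      = -2 * N * α ^ 2 := by field_simp; ring
  rw [hexp_upper] at hupper
  rw [hexp_lower] at hlower
  refine (sum_filter_le_sum_filter_add_sum_filter (fun _ _ => by positivity) ?_).trans
    ((add_le_add hupper hlower).trans_eq (by ring))
  intro f _ hf
  rcases lt_abs.1 hf with h | h
  · left; nlinarith
  · right; nlinarith

theorem stmt_7_general (k : ℕ) (α : ℝ) (hα : 0 < α) (N : ℕ) :
    ∑ f ∈ (Finset.Nat.antidiagonalTuple k N).filter
        (fun f => ∃ i : Fin k, |(f i : ℝ) - (N : ℝ) / k| > α * N),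
      ((Nat.multinomial (Finset.univ : Finset (Fin k)) f : ℝ)) ^ 2
    ≤ 4 * (k : ℝ) ^ (2 * N + 2) * Real.exp (-4 * N * α ^ 2) := by
  have hsum : ∑ f ∈ Nat.antidiagonalTuple k N with ∃ i : Fin k, |(f i : ℝ) - N / k| > α * N,
      (Nat.multinomial univ f : ℝ) ≤ 2 * k ^ (N + 1) * exp (-2 * N * α ^ 2) :=
    calc _ ≤ ∑ i : Fin k, ∑ f ∈ Nat.antidiagonalTuple k N with |(f i : ℝ) - N / k| > α * N,
          (Nat.multinomial univ f : ℝ) :=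
          sum_filter_le_sum_sum_filter univ (fun _ _ => by positivity) fun f _ ⟨i, hi⟩ =>
            ⟨i, mem_univ i, hi⟩
      _ ≤ ∑ _i : Fin k, 2 * k ^ N * exp (-2 * N * α ^ 2) :=
          sum_le_sum fun i _ => sum_multinomial_filter_abs_sub_gt_le k N i hα.le
      _ = 2 * k ^ (N + 1) * exp (-2 * N * α ^ 2) := by
        simp only [sum_const, card_univ, Fintype.card_fin, nsmul_eq_mul]; ring
  calc _ ≤ (∑ f ∈ Nat.antidiagonalTuple k N with ∃ i : Fin k, |(f i : ℝ) - N / k| > α * N,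
          (Nat.multinomial univ f : ℝ)) ^ 2 :=
        sum_sq_le_sq_sum_of_nonneg fun _ _ => by positivity
    _ ≤ (2 * k ^ (N + 1) * exp (-2 * N * α ^ 2)) ^ 2 := by
        gcongr
    _ = 4 * k ^ (2 * N + 2) * exp (-4 * N * α ^ 2) := by
        rw [mul_pow, mul_pow, ← pow_mul, ← exp_nat_mul]
        ring_nf

/-- Hoeffding tail bound: the contribution of unbalanced compositions to the
sum of squared multinomial coefficients. -/
theorem stmt_7 (k : ℕ) (hk : 2 ≤ k) (α : ℝ) (hα : 0 < α) (hα2 : α < 1 / k) (N : ℕ) :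
    ∑ f ∈ (Finset.Nat.antidiagonalTuple k N).filter
        (fun f => ∃ i : Fin k, |(f i : ℝ) - (N : ℝ) / k| > α * N),
      ((Nat.multinomial (Finset.univ : Finset (Fin k)) f : ℝ)) ^ 2
    ≤ 4 * (k : ℝ) ^ (2 * N + 2) * Real.exp (-4 * N * α ^ 2) :=
  stmt_7_general k α hα N
end

section
/- For fixed k ≥ 1, let Z(n,…,n) be the number of k-tuples (Δ_1,…,Δ_k) of integers with |Δ_i| ≤ n for all i and ∑_{i=1}^k Δ_i = 0. Then lim_{n→∞} Z(n,…,n)/n^{k−1} = (1/(k−1)!) ∑_{j=0}^{⌊k/2⌋} (−1)^j C(k,j) (k−2j)^{k−1}. -/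
/-!
Shifting every `Δ i` by `n`, `Z(n,…,n)` counts the `k`-tuples in `[0, 2n]` with sum `kn`, i.e. the
coefficient of `X^(kn)` in `(1 + X + ⋯ + X^(2n))^k = (1 - X^(2n+1))^k (1 - X)^(-k)`. Expanding gives
`∑ⱼ (-1)^j C(k,j) C(k-1 + kn - (2n+1)j, k-1)`, and the `j`-th binomial is a polynomial
in `n` of degree `k-1` with leading coefficient `(k-2j)^(k-1)/(k-1)!` when `2j < k`, and
vanishes otherwise.
-/

open Finset PowerSeries Filter Topology
open scoped Nat

theorem coeff_prod_sum_X_pow {ι : Type*} [Fintype ι] [DecidableEq ι] (R : Type*) [CommSemiring R]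
    (s : ι → Finset ℕ) (d : ℕ) :
    coeff d (∏ i, ∑ a ∈ s i, (X : R⟦X⟧) ^ a) = #{f ∈ Fintype.piFinset s | ∑ i, f i = d} := by
  simp_rw [prod_univ_sum, prod_pow_eq_pow_sum, map_sum, coeff_X_pow, eq_comm (a := d)]
  rw [sum_boole]

theorem natCard_abs_le_sum_eq_zero {ι : Type*} [Fintype ι] [DecidableEq ι] (n : ℕ) :
    Nat.card {Δ : ι → ℤ // (∀ i, |Δ i| ≤ (n : ℤ)) ∧ ∑ i, Δ i = 0} =
      #{f ∈ Fintype.piFinset fun _ : ι => range (2 * n + 1) | ∑ i, f i = Fintype.card ι * n} := by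
  rw [← Nat.card_eq_finsetCard]
  refine Nat.card_congr
    { toFun := fun Δ => ⟨fun i => (Δ.1 i + n).toNat, ?_⟩
      invFun := fun f => ⟨fun i => (f.1 i : ℤ) - n, ?_⟩
      left_inv := fun Δ => ?_
      right_inv := fun f => ?_ }
  · obtain ⟨Δ, hΔ, hsum⟩ := Δ
    have hbound i : 0 ≤ Δ i + n ∧ Δ i + n ≤ 2 * n := by have := abs_le.mp (hΔ i); omega
    simp only [mem_filter, Fintype.mem_piFinset, mem_range]
    refine ⟨fun i => by have := hbound i; omega, ?_⟩
    zify
    rw [sum_congr rfl fun i _ => Int.toNat_of_nonneg (hbound i).1, sum_add_distrib, hsum]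
    simp
  · obtain ⟨f, hf⟩ := f
    simp only [mem_filter, Fintype.mem_piFinset, mem_range] at hf ⊢
    refine ⟨fun i => abs_le.mpr (by have := hf.1 i; omega), ?_⟩
    rw [sum_sub_distrib, ← Nat.cast_sum, hf.2]
    simp
  · ext i; dsimp only; have := abs_le.mp (Δ.2.1 i); omega
  · ext i; simp

theorem coeff_geom_sum_pow {R : Type*} [CommRing R] {k : ℕ} (hk : 0 < k) (m d : ℕ) :
    coeff d ((∑ i ∈ range m, (X : R⟦X⟧) ^ i) ^ k) =
      ∑ j ∈ range (k + 1), (-1) ^ j * (k.choose j : R) *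
        if m * j ≤ d then ((k - 1 + (d - m * j)).choose (k - 1) : R) else 0 := by
  have hgeom : (∑ i ∈ range m, (X : R⟦X⟧) ^ i) * (1 - X) = 1 - X ^ m := by
    linear_combination -geom_sum_mul (X : R⟦X⟧) m
  have hpow :
      (∑ i ∈ range m, (X : R⟦X⟧) ^ i) ^ k = (1 - X ^ m) ^ k * (invOneSubPow R k).val := by
    rw [← hgeom, mul_pow, ← invOneSubPow_inv_eq_one_sub_pow, mul_assoc, Units.inv_val, mul_one]
  have hexp : (1 - X ^ m : R⟦X⟧) ^ k =
      ∑ j ∈ range (k + 1), C ((-1) ^ j * (k.choose j : R)) * X ^ (m * j) := by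
    rw [sub_eq_add_neg, add_comm, add_pow]
    refine sum_congr rfl fun j _ => ?_
    rw [neg_pow, one_pow, map_mul, map_pow, map_neg, map_one, map_natCast, pow_mul]
    ring
  rw [hpow, hexp, sum_mul, map_sum]
  refine sum_congr rfl fun j _ => ?_
  rw [mul_assoc, coeff_C_mul, coeff_X_pow_mul',
    invOneSubPow_val_eq_mk_sub_one_add_choose_of_pos R k hk, coeff_mk]

theorem tendsto_choose_add_div_pow {M : ℕ → ℕ} {a : ℝ}
    (hM : Tendsto (fun n => (M n : ℝ) / n) atTop (𝓝 a)) (r : ℕ) :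
    Tendsto (fun n => ((r + M n).choose r : ℝ) / n ^ r) atTop (𝓝 (a ^ r / r !)) := by
  have hfactor (i : ℕ) : Tendsto (fun n : ℕ => ((M n + 1 + i : ℕ) : ℝ) / n) atTop (𝓝 a) := by
    have : Tendsto (fun n : ℕ => (M n : ℝ) / n + (1 + i) * (n : ℝ)⁻¹) atTop
        (𝓝 (a + (1 + i) * 0)) :=
      hM.add (tendsto_inv_atTop_zero.comp tendsto_natCast_atTop_atTop |>.const_mul _)
    rw [mul_zero, add_zero] at this
    refine this.congr' ?_
    filter_upwards [eventually_ne_atTop 0] with n hn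
    push_cast
    field_simp
    ring
  have hchoose (n : ℕ) :
      ((r + M n).choose r : ℝ) = (∏ i ∈ range r, ((M n + 1 + i : ℕ) : ℝ)) / r ! := by
    rw [eq_div_iff (by positivity), ← Nat.cast_prod, ← Nat.ascFactorial_eq_prod_range,
      Nat.ascFactorial_eq_factorial_mul_choose, add_comm r]
    push_cast
    ring
  have := (tendsto_finsetProd (range r) fun i _ => hfactor i).div_const (r ! : ℝ)
  rw [prod_const, card_range] at this
  refine this.congr fun n => ?_
  rw [hchoose, prod_div_distrib, prod_const, card_range, div_div, div_div, mul_comm]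

theorem tendsto_ite_choose_div_pow {k : ℕ} (hk : 0 < k) (j : ℕ) :
    Tendsto (fun n : ℕ => (if (2 * n + 1) * j ≤ k * n then
        ((k - 1 + (k * n - (2 * n + 1) * j)).choose (k - 1) : ℝ) else 0) / n ^ (k - 1))
      atTop (𝓝 (if j ≤ k / 2 then ((k : ℝ) - 2 * j) ^ (k - 1) / (k - 1)! else 0)) := by
  rcases lt_or_ge (2 * j) k with hjk | hjk
  · have hM : Tendsto (fun n : ℕ => ((k * n - (2 * n + 1) * j : ℕ) : ℝ) / n) atTop
        (𝓝 ((k : ℝ) - 2 * j)) := by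
      have := (tendsto_inv_atTop_zero.comp tendsto_natCast_atTop_atTop).const_mul (j : ℝ)
        |>.const_sub ((k : ℝ) - 2 * j)
      rw [mul_zero, sub_zero] at this
      refine this.congr' ?_
      filter_upwards [eventually_ge_atTop (j + 1)] with n hn
      have hn0 : (n : ℝ) ≠ 0 := by norm_cast; omega
      rw [Function.comp_apply, Nat.cast_sub (by nlinarith)]
      push_cast
      field_simp
      ring
    rw [if_pos (by omega)]
    refine (tendsto_choose_add_div_pow hM (k - 1)).congr' ?_
    filter_upwards [eventually_ge_atTop j] with n hn
    rw [if_pos (by nlinarith)]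
  · have hvanish (n : ℕ) : ¬ (2 * n + 1) * j ≤ k * n := by nlinarith
    have hlim : (if j ≤ k / 2 then ((k : ℝ) - 2 * j) ^ (k - 1) / (k - 1)! else 0) = 0 := by
      split_ifs with h
      · rw [show (k : ℝ) = 2 * j by exact_mod_cast (by omega : k = 2 * j), sub_self,
          zero_pow (by omega), zero_div]
      · rfl
    simp only [hvanish, if_false, zero_div, hlim, tendsto_const_nhds]

/-- asymptotics of `Z(n,…,n)/n^(k-1)`. -/
theorem stmt_9 (k : ℕ) (hk : 1 ≤ k) :
    Filter.Tendsto (fun n : ℕ =>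
      (Nat.card {Δ : Fin k → ℤ // (∀ i, |Δ i| ≤ (n : ℤ)) ∧ ∑ i, Δ i = 0} : ℝ) /
        (n : ℝ) ^ (k - 1))
      Filter.atTop
      (nhds ((1 / (Nat.factorial (k - 1) : ℝ)) * ∑ j ∈ Finset.range (k / 2 + 1),
        (-1 : ℝ) ^ j * (Nat.choose k j : ℝ) * ((k : ℝ) - 2 * j) ^ (k - 1))) := by
  have hcard (n : ℕ) :
      (Nat.card {Δ : Fin k → ℤ // (∀ i, |Δ i| ≤ (n : ℤ)) ∧ ∑ i, Δ i = 0} : ℝ) / n ^ (k - 1) =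
        ∑ j ∈ range (k + 1), (-1) ^ j * (k.choose j : ℝ) *
          ((if (2 * n + 1) * j ≤ k * n then
            ((k - 1 + (k * n - (2 * n + 1) * j)).choose (k - 1) : ℝ) else 0) / n ^ (k - 1)) := by
    rw [natCard_abs_le_sum_eq_zero, Fintype.card_fin, ← coeff_prod_sum_X_pow ℝ, Fin.prod_const,
      coeff_geom_sum_pow hk, sum_div]
    simp_rw [mul_div_assoc]
  have hlimit : (1 / (k - 1)! : ℝ) * ∑ j ∈ range (k / 2 + 1),
        (-1 : ℝ) ^ j * (k.choose j : ℝ) * ((k : ℝ) - 2 * j) ^ (k - 1) =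
      ∑ j ∈ range (k + 1), (-1) ^ j * (k.choose j : ℝ) *
        (if j ≤ k / 2 then ((k : ℝ) - 2 * j) ^ (k - 1) / (k - 1)! else 0) := by
    have hrange : {j ∈ range (k + 1) | j ≤ k / 2} = range (k / 2 + 1) := by
      ext j; simp only [mem_filter, mem_range]; omega
    simp_rw [mul_ite, mul_zero]
    rw [← sum_filter, hrange, mul_sum]
    exact sum_congr rfl fun j _ => by ring
  simp_rw [hcard, hlimit]
  exact tendsto_finsetSum _ fun j _ => (tendsto_ite_choose_div_pow hk j).const_mul _
end
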